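/- arXiv:2512.17244 — 3 statements merged into one kernel-verified Lean document; each statement's English description precedes it below -/
import Mathlib

section
/- Let Γ = (V,A) be a finite connected digraph, let G ≤ Aut(Γ) be vertex-transitive, and suppose Γ is (G,s)-arc-transitive with s ≥ 3. Let N ⊴ M ⊴ G with N not normal in G, M transitive on V, and N having at least 3 orbits on V. Then the quotient Γ_N is a connected digraph, N lies in the kernel of the induced action of N_G(N) on V_N, and the induced action of N_G(N)/N on Γ_N is vertex-transitive and transitive on the (s−1)-arcs of Γ_N. -/
/-!
Let `M ⊴ G` be vertex-transitive. Then `M` is transitive on the `t`-arcs of `Γ` for every `t < s`,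
by induction on `t`: given `(t+1)`-arcs `p` and `q`, pick `m₀, m₁ ∈ M` carrying the initial
`t`-arcs of `p` and `q` onto the final `t`-arc of `p`; as `m₀ p_{t+1}` and `m₁ q_{t+1}` both
extend `p` to a `(t+2)`-arc, some `g ∈ G` fixes `p` and maps the first to the second, and then
`m₁⁻¹ (g m₀ g⁻¹) ∈ M` maps `p` to `q`. Since `M` normalises `N` and an arc of `Γ_N` lifts through
any vertex of its tail, `M` is transitive on the `(s-1)`-arcs of `Γ_N`. If `Γ_N` had a `2`-cycle
`U → U' → U`, every `2`-arc of `Γ_N` would therefore return to its start, so only `U` and `U'`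
would be reachable from `U`, against connectivity and `3 ≤ |V_N|`.
-/

namespace ArcTransDigraph

variable {V : Type*}

/-- The arc set of a digraph is asymmetric (in particular loopless). -/
def IsDigraph (A : V → V → Prop) : Prop := ∀ u v : V, A u v → ¬ A v u

/-- Connectivity of the underlying undirected graph. -/
def Connected (A : V → V → Prop) : Prop :=
  ∀ u v : V, Relation.ReflTransGen (fun a b => A a b ∨ A b a) u v

/-- `G` consists of automorphisms of the digraph `(V, A)`. -/
def PreservesArcs (A : V → V → Prop) (G : Subgroup (Equiv.Perm V)) : Prop :=
  ∀ g ∈ G, ∀ u v : V, A u v → A (g u) (g v)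

/-- `G` is transitive on vertices. -/
def VertexTransitive (G : Subgroup (Equiv.Perm V)) : Prop :=
  ∀ u v : V, ∃ g ∈ G, g u = v

/-- `p` is an `s`-arc of the digraph with arc set `A`. -/
def IsArcSeq (A : V → V → Prop) (s : ℕ) (p : Fin (s + 1) → V) : Prop :=
  ∀ i : Fin s, A (p i.castSucc) (p i.succ)

/-- `G` is transitive on the `s`-arcs of the digraph with arc set `A`. -/
def ArcTransitive (A : V → V → Prop) (G : Subgroup (Equiv.Perm V)) (s : ℕ) : Prop :=
  ∀ p q : Fin (s + 1) → V, IsArcSeq A s p → IsArcSeq A s q →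
    ∃ g ∈ G, ∀ i : Fin (s + 1), g (p i) = q i

/-- `N` is a subgroup of `G` which is normal in `G`. -/
def NormalIn (N G : Subgroup (Equiv.Perm V)) : Prop :=
  N ≤ G ∧ ∀ g ∈ G, ∀ x ∈ N, g * x * g⁻¹ ∈ N

/-- The `N`-orbit of a vertex, as a point of the orbit space `V_N`. -/
def orbMk (N : Subgroup (Equiv.Perm V)) (v : V) : Quotient (MulAction.orbitRel N V) :=
  Quotient.mk _ v

/-- The arc set of the quotient digraph `Γ_N`. -/
def quotArc (A : V → V → Prop) (N : Subgroup (Equiv.Perm V)) :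
    Quotient (MulAction.orbitRel N V) → Quotient (MulAction.orbitRel N V) → Prop :=
  fun U U' => ∃ u u' : V, orbMk N u = U ∧ orbMk N u' = U' ∧ A u u'

/-- `ℕ`-indexed form of `IsArcSeq`, convenient for shifting and extending arcs. -/
def IsNatArcSeq (A : V → V → Prop) (t : ℕ) (p : ℕ → V) : Prop :=
  ∀ i < t, A (p i) (p (i + 1))

def NatArcTransitive (A : V → V → Prop) (G : Subgroup (Equiv.Perm V)) (t : ℕ) : Prop :=
  ∀ p q : ℕ → V, IsNatArcSeq A t p → IsNatArcSeq A t q → ∃ g ∈ G, ∀ i ≤ t, g (p i) = q i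

section ArcSeq

variable {A : V → V → Prop}

theorem isArcSeq_iff_isNatArcSeq {t : ℕ} {p : ℕ → V} :
    IsArcSeq A t (fun i => p i.val) ↔ IsNatArcSeq A t p :=
  ⟨fun hp i hi => hp ⟨i, hi⟩, fun hp i => hp i i.isLt⟩

theorem exists_nat_extension {α : Type*} {t : ℕ} (p : Fin (t + 1) → α) :
    ∃ q : ℕ → α, p = fun i => q i.val :=
  ⟨fun n => p (Fin.ofNat (t + 1) n), by simp⟩

theorem IsNatArcSeq.update {t : ℕ} {p : ℕ → V} {c : V} (hp : IsNatArcSeq A t p)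
    (hc : A (p t) c) : IsNatArcSeq A (t + 1) (Function.update p (t + 1) c) := by
  intro i hi
  rcases Nat.lt_or_ge i t with h | h
  · rw [Function.update_of_ne (by omega), Function.update_of_ne (by omega)]
    exact hp i h
  · obtain rfl : i = t := by omega
    rwa [Function.update_of_ne (by omega), Function.update_self]

theorem IsNatArcSeq.exists_extend (hout : ∀ v, ∃ w, A v w) {t : ℕ} {p : ℕ → V}
    (hp : IsNatArcSeq A t p) (k : ℕ) :
    ∃ p' : ℕ → V, IsNatArcSeq A (t + k) p' ∧ ∀ i ≤ t, p' i = p i := by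
  induction k with
  | zero => exact ⟨p, hp, fun _ _ => rfl⟩
  | succ k ih =>
    obtain ⟨p', hp', hpp'⟩ := ih
    obtain ⟨c, hc⟩ := hout (p' (t + k))
    exact ⟨_, hp'.update hc, fun i hi => by
      rw [Function.update_of_ne (by omega), hpp' i hi]⟩

theorem ArcTransitive.natArcTransitive {G : Subgroup (Equiv.Perm V)} {s : ℕ}
    (hG : ArcTransitive A G s) : NatArcTransitive A G s := by
  intro p q hp hq
  obtain ⟨g, hg, hgpq⟩ := hG _ _ (isArcSeq_iff_isNatArcSeq.2 hp) (isArcSeq_iff_isNatArcSeq.2 hq)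
  exact ⟨g, hg, fun i hi => hgpq ⟨i, by omega⟩⟩

theorem NatArcTransitive.of_le (hout : ∀ v, ∃ w, A v w) {G : Subgroup (Equiv.Perm V)}
    {s t : ℕ} (hG : NatArcTransitive A G s) (hts : t ≤ s) : NatArcTransitive A G t := by
  intro p q hp hq
  obtain ⟨p', hp', hpp'⟩ := hp.exists_extend hout (s - t)
  obtain ⟨q', hq', hqq'⟩ := hq.exists_extend hout (s - t)
  rw [Nat.add_sub_cancel' hts] at hp' hq'
  obtain ⟨g, hg, hgpq⟩ := hG p' q' hp' hq'
  exact ⟨g, hg, fun i hi => by rw [← hpp' i hi, ← hqq' i hi, hgpq i (hi.trans hts)]⟩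

theorem natArcTransitive_zero {G : Subgroup (Equiv.Perm V)} (hG : VertexTransitive G) :
    NatArcTransitive A G 0 := by
  intro p q _ _
  obtain ⟨g, hg, hgpq⟩ := hG (p 0) (q 0)
  exact ⟨g, hg, fun i hi => by rwa [Nat.le_zero.1 hi]⟩

theorem NatArcTransitive.succ_of_normalIn {G M : Subgroup (Equiv.Perm V)} {t : ℕ}
    (hAut : PreservesArcs A G) (hMG : NormalIn M G) (hG : NatArcTransitive A G (t + 2))
    (hM : NatArcTransitive A M t) : NatArcTransitive A M (t + 1) := by
  intro p q hp hq
  have hshift : IsNatArcSeq A t (fun i => p (i + 1)) := fun i hi => hp (i + 1) (by omega)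
  obtain ⟨m₀, hm₀, hm₀p⟩ := hM p _ (fun i hi => hp i (by omega)) hshift
  obtain ⟨m₁, hm₁, hm₁q⟩ := hM q _ (fun i hi => hq i (by omega)) hshift
  have harc : ∀ m ∈ M, ∀ x : ℕ → V, IsNatArcSeq A (t + 1) x → m (x t) = p (t + 1) →
      A (p (t + 1)) (m (x (t + 1))) := fun m hm x hx hmx =>
    hmx ▸ hAut m (hMG.1 hm) _ _ (hx t (by omega))
  obtain ⟨g, hg, hgp⟩ := hG _ _ (hp.update (harc m₀ hm₀ p hp (hm₀p t le_rfl)))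
    (hp.update (harc m₁ hm₁ q hq (hm₁q t le_rfl)))
  have hfix : ∀ i ≤ t + 1, g (p i) = p i := fun i hi => by
    simpa [Function.update_of_ne (show i ≠ t + 2 by omega)] using hgp i (by omega)
  have hlast : g (m₀ (p (t + 1))) = m₁ (q (t + 1)) := by simpa using hgp (t + 2) le_rfl
  refine ⟨m₁⁻¹ * (g * m₀ * g⁻¹), mul_mem (inv_mem hm₁) (hMG.2 g hg m₀ hm₀), fun i hi => ?_⟩
  have hginv : g⁻¹ (p i) = p i := Equiv.Perm.inv_eq_iff_eq.2 (hfix i hi).symm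
  simp only [Equiv.Perm.mul_apply, hginv, Equiv.Perm.inv_eq_iff_eq]
  rcases Nat.lt_or_ge i (t + 1) with h | h
  · rw [hm₀p i (by omega), hfix (i + 1) (by omega), hm₁q i (by omega)]
  · obtain rfl : i = t + 1 := by omega
    exact hlast

theorem NormalIn.natArcTransitive {G M : Subgroup (Equiv.Perm V)} {s : ℕ}
    (hMG : NormalIn M G) (hAut : PreservesArcs A G) (hout : ∀ v, ∃ w, A v w)
    (hG : ArcTransitive A G s) (hM : VertexTransitive M) :
    ∀ t, t + 1 ≤ s → NatArcTransitive A M t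
  | 0, _ => natArcTransitive_zero hM
  | t + 1, hts => NatArcTransitive.succ_of_normalIn hAut hMG
      (hG.natArcTransitive.of_le hout hts) (hMG.natArcTransitive hAut hout hG hM t (by omega))

end ArcSeq

theorem exists_arc_of_connected [Nontrivial V] {A : V → V → Prop} (hconn : Connected A) :
    ∃ a b, A a b := by
  obtain ⟨u, v, huv⟩ := exists_pair_ne V
  rcases (hconn u v).cases_head with h | ⟨w, h | h, -⟩
  · exact absurd h huv
  · exact ⟨u, w, h⟩
  · exact ⟨w, u, h⟩

theorem exists_arc_from_of_vertexTransitive {A : V → V → Prop} {G : Subgroup (Equiv.Perm V)}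
    (hAut : PreservesArcs A G) (hG : VertexTransitive G) {a b : V} (hab : A a b) (v : V) :
    ∃ w, A v w := by
  obtain ⟨g, hg, rfl⟩ := hG a v
  exact ⟨g b, hAut g hg a b hab⟩

theorem eq_or_eq_of_reflTransGen {α : Type*} {r : α → α → Prop}
    (hclosed : ∀ X Y Z, r X Y → r Y Z → X = Z) {U U' Z : α} (h₁ : r U U') (h₂ : r U' U)
    (hZ : Relation.ReflTransGen (fun a b => r a b ∨ r b a) U Z) : Z = U ∨ Z = U' := by
  induction hZ with
  | refl => exact Or.inl rfl
  | tail _ hYZ ih =>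
    rcases ih with rfl | rfl <;> rcases hYZ with h | h
    · exact Or.inr (hclosed _ _ _ h₂ h).symm
    · exact Or.inr (hclosed _ _ _ h h₁)
    · exact Or.inl (hclosed _ _ _ h₁ h).symm
    · exact Or.inl (hclosed _ _ _ h h₂)

theorem exists_ne_ne_of_three_le_card {α : Type*} (h3 : 3 ≤ Nat.card α) (X Y : α) :
    ∃ Z, Z ≠ X ∧ Z ≠ Y := by
  have : Finite α := Nat.finite_of_card_ne_zero (by omega)
  by_contra! h
  have hsub : (Set.univ : Set α) ⊆ {X, Y} := fun Z _ =>
    (em (Z = X)).elim Or.inl fun hZ => Or.inr (h Z hZ)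
  have := Set.ncard_le_ncard hsub
  have := Set.ncard_insert_le X ({Y} : Set α)
  simp only [Set.ncard_univ, Set.ncard_singleton] at *
  omega

theorem nontrivial_of_one_lt_card_quotient {r : Setoid V} (h : 1 < Nat.card (Quotient r)) :
    Nontrivial V := by
  have : Finite (Quotient r) := Nat.finite_of_card_ne_zero (by omega)
  have : Nontrivial (Quotient r) := Finite.one_lt_card_iff_nontrivial.1 h
  exact (Quotient.mk_surjective (s := r)).nontrivial

section Quotient

variable {A : V → V → Prop} {N : Subgroup (Equiv.Perm V)}

theorem orbMk_eq_orbMk_iff {u v : V} : orbMk N u = orbMk N v ↔ ∃ n ∈ N, n v = u := by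
  simp only [orbMk, Quotient.eq, MulAction.orbitRel_apply, MulAction.mem_orbit_iff,
    Subtype.exists, Subgroup.mk_smul, Equiv.Perm.smul_def, exists_prop]

theorem orbMk_apply_of_mem {x : Equiv.Perm V} (hx : x ∈ N) (v : V) :
    orbMk N (x v) = orbMk N v :=
  orbMk_eq_orbMk_iff.2 ⟨x, hx, rfl⟩

theorem orbMk_apply_eq_of_mem_normalizer {g : Equiv.Perm V}
    (hg : g ∈ Subgroup.normalizer (N : Set (Equiv.Perm V))) {u v : V}
    (h : orbMk N u = orbMk N v) : orbMk N (g u) = orbMk N (g v) := by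
  obtain ⟨n, hn, rfl⟩ := orbMk_eq_orbMk_iff.1 h
  exact orbMk_eq_orbMk_iff.2 ⟨g * n * g⁻¹, (Subgroup.mem_normalizer_iff.1 hg n).1 hn, by simp⟩

theorem NormalIn.le_normalizer {M : Subgroup (Equiv.Perm V)} (hNM : NormalIn N M) :
    M ≤ Subgroup.normalizer (N : Set (Equiv.Perm V)) := fun m hm n =>
  ⟨hNM.2 m hm n, fun hn => by simpa [mul_assoc] using hNM.2 m⁻¹ (inv_mem hm) _ hn⟩

theorem PreservesArcs.mono {G H : Subgroup (Equiv.Perm V)} (hG : PreservesArcs A G)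
    (hHG : H ≤ G) : PreservesArcs A H :=
  fun h hh => hG h (hHG hh)

theorem exists_arc_of_quotArc (hN : PreservesArcs A N) {U U' : Quotient (MulAction.orbitRel N V)}
    (h : quotArc A N U U') {u : V} (hu : orbMk N u = U) : ∃ u', A u u' ∧ orbMk N u' = U' := by
  obtain ⟨w, w', rfl, rfl, hww'⟩ := h
  obtain ⟨n, hn, rfl⟩ := orbMk_eq_orbMk_iff.1 hu
  exact ⟨n w', hN n hn w w' hww', orbMk_apply_of_mem hn w'⟩

theorem exists_lift_of_isNatArcSeq_quotArc (hN : PreservesArcs A N) {t : ℕ}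
    {P : ℕ → Quotient (MulAction.orbitRel N V)} (hP : IsNatArcSeq (quotArc A N) t P) :
    ∃ p : ℕ → V, IsNatArcSeq A t p ∧ ∀ i ≤ t, orbMk N (p i) = P i := by
  induction t with
  | zero =>
    obtain ⟨u, hu⟩ := Quotient.exists_rep (P 0)
    exact ⟨fun _ => u, fun _ h => absurd h (Nat.not_lt_zero _), fun i hi => by
      rw [Nat.le_zero.1 hi]; exact hu⟩
  | succ t ih =>
    obtain ⟨p, hp, hpP⟩ := ih fun i hi => hP i (by omega)
    obtain ⟨c, hc, hcP⟩ := exists_arc_of_quotArc hN (hP t (by omega)) (hpP t le_rfl)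
    refine ⟨_, hp.update hc, fun i hi => ?_⟩
    rcases Nat.lt_or_ge i (t + 1) with h | h
    · rw [Function.update_of_ne (by omega), hpP i (by omega)]
    · obtain rfl : i = t + 1 := by omega
      rwa [Function.update_self]

theorem exists_map_of_isArcSeq_quotArc {M : Subgroup (Equiv.Perm V)} (hN : PreservesArcs A N)
    (hMN : M ≤ Subgroup.normalizer (N : Set (Equiv.Perm V))) {t : ℕ}
    (hM : NatArcTransitive A M t) {p q : Fin (t + 1) → Quotient (MulAction.orbitRel N V)}
    (hp : IsArcSeq (quotArc A N) t p) (hq : IsArcSeq (quotArc A N) t q) :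
    ∃ g ∈ M, ∀ (i : Fin (t + 1)) (u : V), orbMk N u = p i → orbMk N (g u) = q i := by
  obtain ⟨P, rfl⟩ := exists_nat_extension p
  obtain ⟨Q, rfl⟩ := exists_nat_extension q
  obtain ⟨x, hx, hxP⟩ := exists_lift_of_isNatArcSeq_quotArc hN (isArcSeq_iff_isNatArcSeq.1 hp)
  obtain ⟨y, hy, hyQ⟩ := exists_lift_of_isNatArcSeq_quotArc hN (isArcSeq_iff_isNatArcSeq.1 hq)
  obtain ⟨g, hg, hgxy⟩ := hM x y hx hy
  refine ⟨g, hg, fun i u hu => ?_⟩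
  have hi : i.val ≤ t := i.is_le
  rw [orbMk_apply_eq_of_mem_normalizer (hMN hg) (hu.trans (hxP i hi).symm), hgxy i hi, hyQ i hi]

theorem connected_quotArc (hconn : Connected A) : Connected (quotArc A N) := by
  intro U U'
  induction U, U' using Quotient.inductionOn₂ with
  | h u u' =>
    exact Relation.ReflTransGen.lift (orbMk N)
      (fun a b hab => hab.imp (fun h => ⟨a, b, rfl, rfl, h⟩) (fun h => ⟨b, a, rfl, rfl, h⟩))
      _ _ (hconn u u')

theorem isDigraph_quotArc {M : Subgroup (Equiv.Perm V)} (hN : PreservesArcs A N)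
    (hMN : M ≤ Subgroup.normalizer (N : Set (Equiv.Perm V))) (hM : NatArcTransitive A M 2)
    (hconn : Connected A) (h3 : 3 ≤ Nat.card (Quotient (MulAction.orbitRel N V))) :
    IsDigraph (quotArc A N) := by
  intro U U' h₁ h₂
  have hclosed : ∀ X Y Z, quotArc A N X Y → quotArc A N Y Z → X = Z := by
    intro X Y Z hXY hYZ
    obtain ⟨g, -, hg⟩ := exists_map_of_isArcSeq_quotArc hN hMN hM (p := ![U, U', U])
      (q := ![X, Y, Z]) (by simp [IsArcSeq, Fin.forall_fin_two, h₁, h₂])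
      (by simp [IsArcSeq, Fin.forall_fin_two, hXY, hYZ])
    obtain ⟨u, hu⟩ := Quotient.exists_rep U
    simpa using (hg 0 u hu).symm.trans (hg 2 u hu)
  obtain ⟨Z, hZU, hZU'⟩ := exists_ne_ne_of_three_le_card h3 U U'
  exact (eq_or_eq_of_reflTransGen hclosed h₁ h₂ (connected_quotArc hconn U Z)).elim hZU hZU'

end Quotient

theorem subnormal_quotient_arc_transitive_general
    (A : V → V → Prop) (G M N : Subgroup (Equiv.Perm V)) (s : ℕ)
    (hconn : Connected A) (hAut : PreservesArcs A G)
    (hs : 3 ≤ s) (hat : ArcTransitive A G s)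
    (hNM : NormalIn N M) (hMG : NormalIn M G)
    (hMtrans : ∀ u v : V, ∃ m ∈ M, m u = v)
    (horb : 3 ≤ Nat.card (Quotient (MulAction.orbitRel N V))) :
    -- Γ_N is a digraph and is connected
    IsDigraph (quotArc A N) ∧ Connected (quotArc A N) ∧
    -- N lies in the kernel of the induced action of N_G(N) on V_N
    (∀ x ∈ N, ∀ v : V, orbMk N (x v) = orbMk N v) ∧
    -- the induced action of N_G(N)/N on Γ_N is vertex-transitive
    (∀ U U' : Quotient (MulAction.orbitRel N V),
      ∃ g ∈ G ⊓ Subgroup.normalizer (N : Set (Equiv.Perm V)), ∀ u : V, orbMk N u = U → orbMk N (g u) = U') ∧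
    -- the induced action of N_G(N)/N on Γ_N is transitive on (s-1)-arcs
    (∀ p q : Fin ((s - 1) + 1) → Quotient (MulAction.orbitRel N V),
      IsArcSeq (quotArc A N) (s - 1) p → IsArcSeq (quotArc A N) (s - 1) q →
      ∃ g ∈ G ⊓ Subgroup.normalizer (N : Set (Equiv.Perm V)), ∀ (i : Fin ((s - 1) + 1)) (u : V),
        orbMk N u = p i → orbMk N (g u) = q i) := by
  have hMN := hNM.le_normalizer
  have hMle : M ≤ G ⊓ Subgroup.normalizer (N : Set (Equiv.Perm V)) := le_inf hMG.1 hMN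
  have hN : PreservesArcs A N := hAut.mono (hNM.1.trans hMG.1)
  have : Nontrivial V := nontrivial_of_one_lt_card_quotient (r := MulAction.orbitRel N V) (by omega)
  obtain ⟨a, b, hab⟩ := exists_arc_of_connected hconn
  have hM := hMG.natArcTransitive hAut
    (exists_arc_from_of_vertexTransitive (hAut.mono hMG.1) hMtrans hab) hat hMtrans
  refine ⟨isDigraph_quotArc hN hMN (hM 2 (by omega)) hconn horb, connected_quotArc hconn,
    fun x hx => orbMk_apply_of_mem hx, fun U U' => ?_, fun p q hp hq => ?_⟩
  · obtain ⟨g, hg, hgUU'⟩ := exists_map_of_isArcSeq_quotArc hN hMN (hM 0 (by omega))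
      (p := fun _ => U) (q := fun _ => U') (fun i => i.elim0) (fun i => i.elim0)
    exact ⟨g, hMle hg, hgUU' 0⟩
  · obtain ⟨g, hg, hgpq⟩ := exists_map_of_isArcSeq_quotArc hN hMN (hM (s - 1) (by omega)) hp hq
    exact ⟨g, hMle hg, hgpq⟩

theorem subnormal_quotient_arc_transitive
    [Finite V] (A : V → V → Prop) (G M N : Subgroup (Equiv.Perm V)) (s : ℕ)
    (hdig : IsDigraph A) (hconn : Connected A) (hAut : PreservesArcs A G)
    (hvt : VertexTransitive G) (hs : 3 ≤ s) (hat : ArcTransitive A G s)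
    (hNM : NormalIn N M) (hMG : NormalIn M G)
    (hNnotG : ¬ NormalIn N G) (hMtrans : ∀ u v : V, ∃ m ∈ M, m u = v)
    (horb : 3 ≤ Nat.card (Quotient (MulAction.orbitRel N V))) :
    -- Γ_N is a digraph and is connected
    IsDigraph (quotArc A N) ∧ Connected (quotArc A N) ∧
    -- N lies in the kernel of the induced action of N_G(N) on V_N
    (∀ x ∈ N, ∀ v : V, orbMk N (x v) = orbMk N v) ∧
    -- the induced action of N_G(N)/N on Γ_N is vertex-transitive
    (∀ U U' : Quotient (MulAction.orbitRel N V),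
      ∃ g ∈ G ⊓ Subgroup.normalizer (N : Set (Equiv.Perm V)), ∀ u : V, orbMk N u = U → orbMk N (g u) = U') ∧
    -- the induced action of N_G(N)/N on Γ_N is transitive on (s-1)-arcs
    (∀ p q : Fin ((s - 1) + 1) → Quotient (MulAction.orbitRel N V),
      IsArcSeq (quotArc A N) (s - 1) p → IsArcSeq (quotArc A N) (s - 1) q →
      ∃ g ∈ G ⊓ Subgroup.normalizer (N : Set (Equiv.Perm V)), ∀ (i : Fin ((s - 1) + 1)) (u : V),
        orbMk N u = p i → orbMk N (g u) = q i) :=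
  subnormal_quotient_arc_transitive_general A G M N s hconn hAut hs hat hNM hMG hMtrans horb

end ArcTransDigraph
end

section
/- Let Γ = (V,A) be a finite connected digraph, let G ≤ Aut(Γ) be vertex-transitive, and suppose Γ is (G,s)-arc-transitive with s ≥ 2. Let N ⊴ G have at least 3 orbits on V, and let r ≥ 3. If no G-normal quotient of Γ (i.e. no quotient Γ_M with M ⊴ G intransitive on V) is isomorphic to the directed cycle C_r→, then no (G/N)-normal quotient of Γ_N is isomorphic to C_r→. -/
/-!
Statement 0: normal quotients of (G,s)-arc-transitive digraphs (Proposition p:quot(a)).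
-/

namespace ArcTransDigraph

variable {V : Type*}

/-- The orbit-relation of the induced action of `M/N` on the `N`-orbit space `V_N`:
two `N`-orbits are related if some element of `M` carries a representative of the first
to a representative of the second.  The quotient `Quot (relOn N M)` is the vertex set of
the quotient digraph `(Γ_N)_{M/N}`. -/
def relOn (N M : Subgroup (Equiv.Perm V)) :
    Quotient (MulAction.orbitRel N V) → Quotient (MulAction.orbitRel N V) → Prop :=
  fun U U' => ∃ u u' : V, orbMk N u = U ∧ orbMk N u' = U' ∧ ∃ m ∈ M, m u = u'

/-- The arc set of the quotient digraph `(Γ_N)_{M/N}` of `Γ_N`. -/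
def quot2Arc (A : V → V → Prop) (N M : Subgroup (Equiv.Perm V)) :
    Quot (relOn N M) → Quot (relOn N M) → Prop :=
  fun W W' => ∃ U U' : Quotient (MulAction.orbitRel N V),
    Quot.mk _ U = W ∧ Quot.mk _ U' = W' ∧ quotArc A N U U'

/-- The digraph with arc set `B` on vertex set `α` is isomorphic to the directed cycle
`C_r→`, whose vertex set is `Z_r` with arcs `(i, i+1)`. -/
def IsoDirectedCycle {α : Type*} (B : α → α → Prop) (r : ℕ) : Prop :=
  ∃ e : α ≃ ZMod r, ∀ a b : α, B a b ↔ e b = e a + 1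

section Helpers

variable (N M : Subgroup (Equiv.Perm V))

lemma orbMk_eq_iff {M : Subgroup (Equiv.Perm V)} {u v : V} :
    orbMk M u = orbMk M v ↔ ∃ m ∈ M, m v = u := by
  constructor
  · intro h
    obtain ⟨m, hm⟩ := Quotient.eq''.mp h
    exact ⟨m, m.2, hm⟩
  · rintro ⟨m, hm, rfl⟩
    exact Quotient.sound ⟨⟨m, hm⟩, rfl⟩

/-- The natural map `V_M → (V_N)_{M/N}`. -/
def psi (hNM : N ≤ M) : Quotient (MulAction.orbitRel M V) → Quot (relOn N M) :=
  Quotient.lift (fun v => Quot.mk _ (orbMk N v)) (by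
    intro u v huv
    obtain ⟨m, hm⟩ := huv
    exact (Quot.sound ⟨v, u, rfl, rfl, m, m.2, hm⟩).symm)

/-- The natural map `(V_N)_{M/N} → V_M`. -/
def phi (hNM : N ≤ M) : Quot (relOn N M) → Quotient (MulAction.orbitRel M V) :=
  Quot.lift (Quotient.lift (orbMk M) (by
      intro u v huv
      obtain ⟨n, hn⟩ := huv
      exact orbMk_eq_iff.mpr ⟨n, hNM n.2, hn⟩))
    (by
      rintro U U' ⟨u, u', rfl, rfl, m, hm, hmu⟩
      exact (orbMk_eq_iff.mpr ⟨m, hm, hmu⟩).symm)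

lemma psi_orbMk (hNM : N ≤ M) (v : V) : psi N M hNM (orbMk M v) = Quot.mk _ (orbMk N v) := rfl

lemma phi_psi (hNM : N ≤ M) (x : Quotient (MulAction.orbitRel M V)) :
    phi N M hNM (psi N M hNM x) = x := by
  induction x using Quotient.inductionOn
  rfl

lemma psi_phi (hNM : N ≤ M) (x : Quot (relOn N M)) :
    psi N M hNM (phi N M hNM x) = x := by
  induction x using Quot.inductionOn with
  | _ U => induction U using Quotient.inductionOn; rfl

/-- The bijection `V_M ≃ (V_N)_{M/N}`. -/
def psiEquiv (hNM : N ≤ M) : Quotient (MulAction.orbitRel M V) ≃ Quot (relOn N M) where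
  toFun := psi N M hNM
  invFun := phi N M hNM
  left_inv := phi_psi N M hNM
  right_inv := psi_phi N M hNM

lemma arc_iff (A : V → V → Prop) (hNM : N ≤ M)
    (a b : Quotient (MulAction.orbitRel M V)) :
    quotArc A M a b ↔ quot2Arc A N M (psi N M hNM a) (psi N M hNM b) := by
  induction a using Quotient.inductionOn with
  | _ v =>
  induction b using Quotient.inductionOn with
  | _ v' =>
  constructor
  · rintro ⟨u, u', hu, hu', hA⟩
    refine ⟨orbMk N u, orbMk N u', ?_, ?_, u, u', rfl, rfl, hA⟩
    · obtain ⟨m, hm, hmv⟩ := orbMk_eq_iff.mp hu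
      exact (Quot.sound ⟨v, u, rfl, rfl, m, hm, hmv⟩).symm
    · obtain ⟨m, hm, hmv⟩ := orbMk_eq_iff.mp hu'
      exact (Quot.sound ⟨v', u', rfl, rfl, m, hm, hmv⟩).symm
  · rintro ⟨U, U', hU, hU', u, u', rfl, rfl, hA⟩
    refine ⟨u, u', ?_, ?_, hA⟩
    · have := congrArg (phi N M hNM) hU
      exact this
    · exact congrArg (phi N M hNM) hU'

end Helpers

theorem no_cycle_quotient_of_no_cycle_quotient
    [Finite V] (A : V → V → Prop) (G N : Subgroup (Equiv.Perm V)) (s r : ℕ)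
    (hdig : IsDigraph A) (hconn : Connected A) (hAut : PreservesArcs A G)
    (hvt : VertexTransitive G) (hs : 2 ≤ s) (hat : ArcTransitive A G s)
    (hN : NormalIn N G)
    (horbN : 3 ≤ Nat.card (Quotient (MulAction.orbitRel N V)))
    (hr : 3 ≤ r)
    -- no G-normal quotient of Γ is isomorphic to the directed cycle C_r→
    (hnc : ∀ M : Subgroup (Equiv.Perm V), NormalIn M G →
      (¬ ∀ u v : V, ∃ m ∈ M, m u = v) → ¬ IsoDirectedCycle (quotArc A M) r) :
    -- no (G/N)-normal quotient of Γ_N is isomorphic to C_r→ : the normal subgroups of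
    -- G/N are the M/N with N ≤ M ⊴ G, and M/N is intransitive on V_N iff M is
    -- intransitive on V
    ∀ M : Subgroup (Equiv.Perm V), N ≤ M → NormalIn M G →
      (¬ ∀ u v : V, ∃ m ∈ M, m u = v) →
      ¬ IsoDirectedCycle (quot2Arc A N M) r := by
  intro M hNM hMG hMint hiso
  obtain ⟨e, he⟩ := hiso
  refine hnc M hMG hMint ⟨(psiEquiv N M hNM).trans e, ?_⟩
  intro a b
  rw [arc_iff N M A hNM a b]
  exact he _ _

end ArcTransDigraph
end

section
/- Let Γ = (V,A) be a finite connected bipartite digraph with parts Δ, Δ', let G ≤ Aut(Γ) be vertex-transitive, and suppose Γ is (G,s)-arc-transitive with s ≥ 4. Let G^+ be the index-2 subgroup of G fixing Δ and Δ' setwise, and let Γ' = (Δ, A_2) be the bipartite half on Δ. Then: Γ' is connected; G^+ preserves A_2, acts transitively on Δ, and acts transitively on the floor(s/2)-arcs of Γ'; and either Γ' is a digraph (i.e. (u,w) ∈ A_2 implies (w,u) ∉ A_2), or Γ is isomorphic to the directed cycle C_4→ (in which case G ≅ Z_4, |Δ| = 2 and Γ' is the complete graph K_2 with both ordered pairs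 as arcs). -/
/-!
Since `V` is finite and `G` is vertex-transitive, every walk from `u` to `g u` can be continued
along `g, g², …` back to `u`, so `Γ` is strongly connected; a walk between vertices of `Δ`
alternates between the parts and hence is a walk of `Γ'`. By connectivity, an element of `G`
mapping one vertex of `Δ` into `Δ` fixes both parts, so it lies in `G⁺`. Interleaving a
`⌊s/2⌋`-arc of `Γ'` with the middle vertices of its arcs gives a `2⌊s/2⌋`-arc of `Γ`, and
`s`-arc-transitivity passes to shorter arcs. Finally, arcs `u → w` and `w → u` of `Γ'` give a
closed `4`-arc of `Γ`; by `4`-arc-transitivity every `4`-arc is closed, so each vertex `x` has a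
unique out-neighbour `σ x`, with `σ⁴ = 1` and, as `Γ` has no loops or digons, no shorter period:
`Γ` is the directed `4`-cycle. Its automorphisms are rotations, so `G` acts regularly and is
`ℤ/4`.
-/

namespace ArcTransDigraph

variable {V : Type*}

/-- `Δ, Δ'` form a bipartition of the digraph with arc set `A`. -/
def IsBipartition (A : V → V → Prop) (Δ Δ' : Set V) : Prop :=
  Disjoint Δ Δ' ∧ Δ ∪ Δ' = Set.univ ∧
    ∀ u v : V, A u v → ((u ∈ Δ ∧ v ∈ Δ') ∨ (u ∈ Δ' ∧ v ∈ Δ))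

/-- The arc set `A_2` of the bipartite half of `Γ = (V,A)` on the part `Δ`. -/
def halfArc (A : V → V → Prop) (Δ Δ' : Set V) : V → V → Prop :=
  fun u w => u ∈ Δ ∧ w ∈ Δ ∧ ∃ v ∈ Δ', A u v ∧ A v w

open Function Relation

section Bipartition

variable {A : V → V → Prop} {Δ Δ' : Set V}

lemma IsBipartition.mem_right_iff (hbip : IsBipartition A Δ Δ') (v : V) :
    v ∈ Δ' ↔ v ∉ Δ := by
  obtain ⟨hdisj, hcover, -⟩ := hbip
  refine ⟨fun hv' hv => Set.disjoint_left.mp hdisj hv hv', fun hv => ?_⟩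
  have hv' : v ∈ Δ ∪ Δ' := hcover ▸ Set.mem_univ v
  exact hv'.resolve_left hv

lemma IsBipartition.mem_iff_notMem_of_adj (hbip : IsBipartition A Δ Δ') {a b : V}
    (h : A a b ∨ A b a) : b ∈ Δ ↔ a ∉ Δ := by
  have ha := hbip.mem_right_iff a
  have hb := hbip.mem_right_iff b
  rcases h with h | h <;> rcases hbip.2.2 _ _ h with ⟨h1, h2⟩ | ⟨h1, h2⟩ <;> tauto

lemma IsBipartition.mem_iff_map_mem (hbip : IsBipartition A Δ Δ') (hconn : Connected A)
    {g : V → V} (hg : ∀ a b, A a b → A (g a) (g b)) {u : V} (hu : u ∈ Δ) (hgu : g u ∈ Δ)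
    (v : V) : v ∈ Δ ↔ g v ∈ Δ := by
  induction hconn u v with
  | refl => exact iff_of_true hu hgu
  | tail _ hbc ih =>
    have h := hbip.mem_iff_notMem_of_adj hbc
    have hg := hbip.mem_iff_notMem_of_adj (hbc.imp (hg _ _) (hg _ _))
    tauto

lemma reflTransGen_halfArc (hbip : IsBipartition A Δ Δ') {u w : V} (hu : u ∈ Δ)
    (h : ReflTransGen A u w) :
    (w ∈ Δ → ReflTransGen (halfArc A Δ Δ') u w) ∧
      (w ∈ Δ' → ∃ x ∈ Δ, ReflTransGen (halfArc A Δ Δ') u x ∧ A x w) := by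
  induction h with
  | refl => exact ⟨fun _ => .refl, fun hu' => absurd hu ((hbip.mem_right_iff u).1 hu')⟩
  | @tail b c _ hbc ih =>
    rcases hbip.2.2 _ _ hbc with ⟨hb, hc⟩ | ⟨hb, hc⟩
    · exact ⟨fun hc' => absurd hc' ((hbip.mem_right_iff c).1 hc),
        fun _ => ⟨b, hb, ih.1 hb, hbc⟩⟩
    · obtain ⟨x, hx, hux, hxb⟩ := ih.2 hb
      exact ⟨fun _ => hux.tail ⟨hx, hc, b, hb, hxb, hbc⟩,
        fun hc' => absurd hc ((hbip.mem_right_iff c).1 hc')⟩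

end Bipartition

section VertexTransitive

variable {A : V → V → Prop} {G : Subgroup (Equiv.Perm V)}

lemma exists_arc_from (hAut : PreservesArcs A G) (hvt : VertexTransitive G) {a b : V}
    (hab : A a b) (x : V) : ∃ y, A x y := by
  obtain ⟨g, hg, rfl⟩ := hvt a x
  exact ⟨g b, hAut g hg _ _ hab⟩

lemma exists_arc_to (hAut : PreservesArcs A G) (hvt : VertexTransitive G) {a b : V}
    (hab : A a b) (x : V) : ∃ y, A y x := by
  obtain ⟨g, hg, rfl⟩ := hvt b x
  exact ⟨g a, hAut g hg _ _ hab⟩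

lemma reflTransGen_symm_of_vertexTransitive [Finite V] (hAut : PreservesArcs A G)
    (hvt : VertexTransitive G) {u v : V} (h : ReflTransGen A u v) : ReflTransGen A v u := by
  obtain ⟨g, hg, rfl⟩ := hvt u v
  have hstep (n : ℕ) : ReflTransGen A ((g ^ n) u) ((g ^ (n + 1)) u) := by
    simpa [pow_succ] using h.lift (g ^ n) fun a b => hAut _ (pow_mem hg n) a b
  have hchain (n : ℕ) : ReflTransGen A (g u) ((g ^ (n + 1)) u) := by
    induction n with
    | zero => simpa using ReflTransGen.refl
    | succ n ih => exact ih.trans (hstep (n + 1))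
  obtain ⟨m, hm⟩ : ∃ m, orderOf g = m + 1 := Nat.exists_eq_add_one.2 (orderOf_pos g)
  simpa [← hm, pow_orderOf_eq_one] using hchain m

lemma reflTransGen_of_vertexTransitive [Finite V] (hconn : Connected A)
    (hAut : PreservesArcs A G) (hvt : VertexTransitive G) (u v : V) : ReflTransGen A u v := by
  induction hconn u v with
  | refl => exact .refl
  | tail _ hbc ih =>
    rcases hbc with h | h
    · exact ih.tail h
    · exact ih.trans (reflTransGen_symm_of_vertexTransitive hAut hvt (.single h))

end VertexTransitive

section ArcSeq

variable {A : V → V → Prop} {G : Subgroup (Equiv.Perm V)} {s : ℕ}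

lemma IsArcSeq.snoc {p : Fin (s + 1) → V} (hp : IsArcSeq A s p) {y : V}
    (hy : A (p (Fin.last s)) y) : IsArcSeq A (s + 1) (Fin.snoc p y) := by
  intro i
  induction i using Fin.lastCases with
  | last => simpa using hy
  | cast j =>
    rw [Fin.succ_castSucc, Fin.snoc_castSucc, Fin.snoc_castSucc]
    exact hp j

lemma IsArcSeq.cons {p : Fin (s + 1) → V} (hp : IsArcSeq A s p) {y : V} (hy : A y (p 0)) :
    IsArcSeq A (s + 1) (Fin.cons y p) := by
  intro i
  induction i using Fin.cases with
  | zero => simpa using hy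
  | succ j => simpa [← Fin.succ_castSucc] using hp j

lemma exists_isArcSeq_last_eq (hin : ∀ x, ∃ y, A y x) (m : ℕ) (a : V) :
    ∃ p : Fin (m + 1) → V, IsArcSeq A m p ∧ p (Fin.last m) = a := by
  induction m generalizing a with
  | zero => exact ⟨fun _ => a, fun i => i.elim0, rfl⟩
  | succ m ih =>
    obtain ⟨p, hp, rfl⟩ := ih a
    obtain ⟨y, hy⟩ := hin (p 0)
    exact ⟨Fin.cons y p, hp.cons hy, Fin.cons_last _ _⟩

lemma ArcTransitive.of_succ (hat : ArcTransitive A G (s + 1)) (hout : ∀ x, ∃ y, A x y) :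
    ArcTransitive A G s := by
  intro p q hp hq
  obtain ⟨y, hy⟩ := hout (p (Fin.last s))
  obtain ⟨z, hz⟩ := hout (q (Fin.last s))
  obtain ⟨g, hg, hgpq⟩ := hat _ _ (hp.snoc hy) (hq.snoc hz)
  exact ⟨g, hg, fun i => by simpa using hgpq i.castSucc⟩

lemma ArcTransitive.mono (hout : ∀ x, ∃ y, A x y) {m : ℕ} (hm : m ≤ s) :
    ArcTransitive A G s → ArcTransitive A G m := by
  induction hm with
  | refl => exact id
  | step _ ih => exact fun hat => ih (hat.of_succ hout)

lemma ArcTransitive.last_eq_zero (hat : ArcTransitive A G s) {c : Fin (s + 1) → V}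
    (hc : IsArcSeq A s c) (hc0 : c (Fin.last s) = c 0) {p : Fin (s + 1) → V}
    (hp : IsArcSeq A s p) : p (Fin.last s) = p 0 := by
  obtain ⟨g, -, hg⟩ := hat c p hc hp
  rw [← hg, ← hg, hc0]

lemma IsArcSeq.exists_of_halfArc {Δ Δ' : Set V} {t : ℕ} {p : Fin (t + 1) → V}
    (hp : IsArcSeq (halfArc A Δ Δ') t p) :
    ∃ P : Fin (2 * t + 1) → V,
      IsArcSeq A (2 * t) P ∧ ∀ i : Fin (t + 1), P ⟨2 * i, by omega⟩ = p i := by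
  choose mid _ hmid₁ hmid₂ using fun i => (hp i).2.2
  refine ⟨fun j => if h : j.val % 2 = 0 then p ⟨j / 2, by omega⟩
      else mid ⟨j / 2, by omega⟩, fun i => ?_, fun i => ?_⟩
  · simp only [Fin.val_castSucc, Fin.val_succ]
    split_ifs with h₁ h₂ h₂
    · omega
    · convert hmid₁ ⟨i / 2, by omega⟩ using 3
      · rfl
      · omega
    · convert hmid₂ ⟨i / 2, by omega⟩ using 3
      simp only [Fin.succ_mk]
      omega
    · omega
  · simp

lemma ArcTransitive.exists_map_of_halfArc {Δ Δ' : Set V} {t : ℕ}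
    (hat : ArcTransitive A G (2 * t)) {p q : Fin (t + 1) → V}
    (hp : IsArcSeq (halfArc A Δ Δ') t p) (hq : IsArcSeq (halfArc A Δ Δ') t q) :
    ∃ g ∈ G, ∀ i, g (p i) = q i := by
  obtain ⟨P, hP, hPp⟩ := hp.exists_of_halfArc
  obtain ⟨Q, hQ, hQq⟩ := hq.exists_of_halfArc
  obtain ⟨g, hg, hgPQ⟩ := hat P Q hP hQ
  exact ⟨g, hg, fun i => by rw [← hPp, ← hQq, hgPQ]⟩

end ArcSeq

section FunctionalDigraph

variable {A : V → V → Prop} {s : ℕ}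

/-- The out-neighbour of `a` is the initial vertex of any `s`-arc ending at `a`. -/
lemma exists_arc_iff_eq_of_forall_closed (hin : ∀ x, ∃ y, A y x) (hout : ∀ x, ∃ y, A x y)
    (hclosed : ∀ p, IsArcSeq A (s + 1) p → p (Fin.last (s + 1)) = p 0) :
    ∃ σ : V → V, (∀ a b, A a b ↔ b = σ a) ∧ ∀ x, σ^[s + 1] x = x := by
  have hunique (a b b' : V) (hb : A a b) (hb' : A a b') : b = b' := by
    obtain ⟨p, hp, rfl⟩ := exists_isArcSeq_last_eq hin s a
    have h := hclosed _ (hp.snoc hb)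
    have h' := hclosed _ (hp.snoc hb')
    rw [Fin.snoc_last, ← Fin.castSucc_zero, Fin.snoc_castSucc] at h h'
    rw [h, h']
  choose σ hσ using hout
  refine ⟨σ, fun a b => ⟨fun h => hunique _ _ _ h (hσ a), fun h => h ▸ hσ a⟩,
    fun x => ?_⟩
  have hx : IsArcSeq A (s + 1) fun i => σ^[i] x := fun i => by
    simpa only [Fin.val_castSucc, Fin.val_succ, iterate_succ_apply'] using hσ _
  simpa using hclosed _ hx

lemma minimalPeriod_eq_four (hdig : IsDigraph A) {σ : V → V} (hA : ∀ a b, A a b ↔ b = σ a)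
    {x : V} (hx : σ^[4] x = x) : minimalPeriod σ x = 4 := by
  have hx' : IsPeriodicPt σ 4 x := hx
  have hdvd := hx'.minimalPeriod_dvd
  have hpos := hx'.minimalPeriod_pos (by norm_num)
  have hle := Nat.le_of_dvd (by norm_num) hdvd
  have hper := isPeriodicPt_minimalPeriod σ x
  have h₁ : σ x ≠ x := fun h => hdig x x ((hA _ _).2 h.symm) ((hA _ _).2 h.symm)
  have h₂ : σ (σ x) ≠ x := fun h => hdig x (σ x) ((hA _ _).2 rfl) ((hA _ _).2 h.symm)
  interval_cases hm : minimalPeriod σ x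
  · exact absurd hper h₁
  · exact absurd hper h₂
  · norm_num at hdvd
  · rfl

lemma isoDirectedCycle_of_iterate {n : ℕ} [NeZero n] {σ : V → V}
    (hA : ∀ a b, A a b ↔ b = σ a) (hconn : Connected A) (hper : ∀ x, σ^[n] x = x) {u : V}
    (hu : minimalPeriod σ u = n) : IsoDirectedCycle A n := by
  let f : ZMod n → V := fun k => σ^[k.val] u
  have hf_natCast (m : ℕ) : f m = σ^[m] u := by
    simp only [f, ZMod.val_natCast]
    exact IsPeriodicPt.iterate_mod_apply (hper u) m
  have hf_succ (k : ZMod n) : σ (f k) = f (k + 1) := by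
    rw [← ZMod.natCast_zmod_val k, hf_natCast, ← Nat.cast_succ, hf_natCast, iterate_succ_apply']
  have hinj : Injective f := fun k j h =>
    ZMod.val_injective n (iterate_injOn_Iio_minimalPeriod (hu ▸ k.val_lt) (hu ▸ j.val_lt) h)
  have hsurj : Surjective f := by
    intro x
    obtain ⟨m, hm⟩ : ∃ m : ℕ, σ^[m] u = x := by
      induction hconn u x with
      | refl => exact ⟨0, rfl⟩
      | tail _ hbc ih =>
        obtain ⟨m, rfl⟩ := ih
        rcases hbc with h | h
        · exact ⟨m + 1, by rw [iterate_succ_apply', (hA _ _).1 h]⟩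
        · refine ⟨n - 1 + m, ?_⟩
          rw [iterate_add_apply, (hA _ _).1 h, ← iterate_succ_apply, Nat.succ_eq_add_one,
            Nat.sub_add_cancel NeZero.one_le, hper]
    exact ⟨m, (hf_natCast m).trans hm⟩
  let e := Equiv.ofBijective f ⟨hinj, hsurj⟩
  refine ⟨e.symm, fun a b => ?_⟩
  obtain ⟨k, rfl⟩ := e.surjective a
  obtain ⟨j, rfl⟩ := e.surjective b
  rw [e.symm_apply_apply, e.symm_apply_apply]
  change A (f k) (f j) ↔ _
  rw [hA, hf_succ, hinj.eq_iff]

lemma exists_closed_of_not_isDigraph_halfArc {Δ Δ' : Set V}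
    (hD : ¬ IsDigraph (halfArc A Δ Δ')) :
    ∃ c : Fin 5 → V, IsArcSeq A 4 c ∧ c (Fin.last 4) = c 0 ∧ c 0 ∈ Δ := by
  simp only [IsDigraph, not_forall, not_not] at hD
  obtain ⟨u, w, ⟨hu, -, v, -, huv, hvw⟩, ⟨-, -, v', -, hwv', hv'u⟩⟩ := hD
  refine ⟨![u, v, w, v', u], fun i => ?_, rfl, hu⟩
  fin_cases i <;> assumption

lemma isoDirectedCycle_four_of_closed {G : Subgroup (Equiv.Perm V)} (hdig : IsDigraph A)
    (hconn : Connected A) (hAut : PreservesArcs A G) (hvt : VertexTransitive G)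
    (hat : ArcTransitive A G 4) {c : Fin 5 → V} (hc : IsArcSeq A 4 c)
    (hc0 : c (Fin.last 4) = c 0) : IsoDirectedCycle A 4 := by
  have hc₀₁ := hc 0
  obtain ⟨σ, hA, hσ⟩ := exists_arc_iff_eq_of_forall_closed (exists_arc_to hAut hvt hc₀₁)
    (exists_arc_from hAut hvt hc₀₁) fun p hp => hat.last_eq_zero hc hc0 hp
  exact isoDirectedCycle_of_iterate hA hconn hσ (minimalPeriod_eq_four hdig hA (hσ (c 0)))

end FunctionalDigraph

lemma ZMod.map_eq_map_zero_add {n : ℕ} [NeZero n] {f : ZMod n → ZMod n}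
    (hf : ∀ k, f (k + 1) = f k + 1) (k : ZMod n) : f k = f 0 + k := by
  have hnat (m : ℕ) : f m = f 0 + m := by
    induction m with
    | zero => simp
    | succ m ih => rw [Nat.cast_succ, hf, ih, add_assoc]
  simpa only [ZMod.natCast_zmod_val] using hnat k.val

section DirectedCycle

variable {A : V → V → Prop} {n : ℕ} (e : V ≃ ZMod n) (he : ∀ a b, A a b ↔ e b = e a + 1)
include he

lemma map_eq_add_of_isoDirectedCycle [NeZero n] {g : V → V}
    (hg : ∀ a b, A a b → A (g a) (g b)) (a : V) : e (g a) = e a + e (g (e.symm 0)) := by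
  have hrot := ZMod.map_eq_map_zero_add (f := e ∘ g ∘ e.symm) (fun k => ?_) (e a)
  · simpa [add_comm] using hrot
  · have hk : A (e.symm k) (e.symm (k + 1)) := (he _ _).2 (by simp)
    simpa using (he _ _).1 (hg _ _ hk)

lemma nonempty_mulEquiv_of_isoDirectedCycle [NeZero n] {G : Subgroup (Equiv.Perm V)}
    (hAut : PreservesArcs A G) (hvt : VertexTransitive G) :
    Nonempty (G ≃* Multiplicative (ZMod n)) := by
  have hrot (g : G) := map_eq_add_of_isoDirectedCycle e he (hAut g g.2)
  let φ : G →* Multiplicative (ZMod n) :=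
    { toFun g := .ofAdd (e ((g : Equiv.Perm V) (e.symm 0)))
      map_one' := by simp
      map_mul' g h := by
        simp only [Subgroup.coe_mul, Equiv.Perm.mul_apply, hrot g ((h : Equiv.Perm V) _)]
        rw [ofAdd_add, mul_comm] }
  have hinj : Injective φ := fun g h hgh => Subtype.ext <| Equiv.ext fun a => e.injective <| by
    rw [hrot g, hrot h]
    exact congrArg (e a + ·) (Multiplicative.ofAdd.injective hgh)
  have hsurj : Surjective φ := fun k => by
    obtain ⟨g, hg, hgk⟩ := hvt (e.symm 0) (e.symm k.toAdd)
    exact ⟨⟨g, hg⟩, by simp [φ, hgk]⟩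
  exact ⟨MulEquiv.ofBijective φ ⟨hinj, hsurj⟩⟩

lemma halfArc_iff_of_isoDirectedCycle {Δ Δ' : Set V} (hbip : IsBipartition A Δ Δ') (a b : V) :
    halfArc A Δ Δ' a b ↔ a ∈ Δ ∧ b ∈ Δ ∧ e b = e a + 2 := by
  constructor
  · rintro ⟨ha, hb, x, -, hax, hxb⟩
    refine ⟨ha, hb, ?_⟩
    rw [(he _ _).1 hxb, (he _ _).1 hax, add_assoc, one_add_one_eq_two]
  · rintro ⟨ha, hb, hab⟩
    have hax : A a (e.symm (e a + 1)) := (he _ _).2 (by simp)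
    have hxb : A (e.symm (e a + 1)) b := (he _ _).2 (by simp [hab, add_assoc, one_add_one_eq_two])
    refine ⟨ha, hb, _, (hbip.mem_right_iff _).2 fun hx => ?_, hax, hxb⟩
    exact (hbip.mem_iff_notMem_of_adj (.inl hax)).1 hx ha

end DirectedCycle

section DirectedFourCycle

variable {A : V → V → Prop} {Δ Δ' : Set V} (e : V ≃ ZMod 4)
  (he : ∀ a b, A a b ↔ e b = e a + 1) (hbip : IsBipartition A Δ Δ') {u : V} (hu : u ∈ Δ)
include he hbip hu

lemma mem_iff_of_isoDirectedCycle_four (x : V) : x ∈ Δ ↔ e x = e u ∨ e x = e u + 2 := by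
  have hstep (k : ZMod 4) : e.symm (e u + (k + 1)) ∈ Δ ↔ e.symm (e u + k) ∉ Δ :=
    hbip.mem_iff_notMem_of_adj (.inl ((he _ _).2 (by simp [add_assoc])))
  have h₁ : e.symm (e u + 1) ∉ Δ := by simpa [hu] using hstep 0
  have h₂ : e.symm (e u + 2) ∈ Δ := (hstep 1).2 h₁
  have h₃ : e.symm (e u + 3) ∉ Δ := fun h => (hstep 2).1 h h₂
  obtain ⟨k, rfl⟩ : ∃ k, e.symm (e u + k) = x := ⟨e x - e u, by simp⟩
  rw [e.apply_symm_apply, add_eq_left, add_right_inj]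
  obtain rfl | rfl | rfl | rfl : k = 0 ∨ k = 1 ∨ k = 2 ∨ k = 3 := by revert k; decide
  all_goals simp +decide [hu, h₁, h₂, h₃]

lemma ncard_eq_two_of_isoDirectedCycle_four : Δ.ncard = 2 := by
  have hΔ : Δ = {u, e.symm (e u + 2)} := by
    ext x
    rw [mem_iff_of_isoDirectedCycle_four e he hbip hu, Set.mem_insert_iff, Set.mem_singleton_iff,
      e.eq_symm_apply, e.apply_eq_iff_eq]
  rw [hΔ, Set.ncard_pair]
  intro h
  have h20 : (2 : ZMod 4) = 0 := by simpa using congrArg e h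
  exact absurd h20 (by decide)

lemma halfArc_iff_ne_of_isoDirectedCycle_four (a b : V) :
    halfArc A Δ Δ' a b ↔ a ∈ Δ ∧ b ∈ Δ ∧ a ≠ b := by
  rw [halfArc_iff_of_isoDirectedCycle e he hbip]
  refine and_congr_right fun ha => and_congr_right fun hb => ?_
  rw [mem_iff_of_isoDirectedCycle_four e he hbip hu] at ha hb
  rw [Ne, ← e.apply_eq_iff_eq]
  generalize e a = i at *
  generalize e b = j at *
  generalize e u = c at *
  revert i j c
  decide

end DirectedFourCycle

theorem bipartite_half_general
    [Finite V] (A : V → V → Prop) (G Gp : Subgroup (Equiv.Perm V)) (s : ℕ)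
    (Δ Δ' : Set V)
    (hdig : IsDigraph A) (hconn : Connected A) (hAut : PreservesArcs A G)
    (hvt : VertexTransitive G) (hs : 4 ≤ s) (hat : ArcTransitive A G s)
    (hbip : IsBipartition A Δ Δ')
    -- G⁺ is the subgroup of G fixing Δ and Δ' setwise
    (hGp : ∀ g : Equiv.Perm V, g ∈ Gp ↔
      (g ∈ G ∧ (∀ v : V, v ∈ Δ ↔ g v ∈ Δ) ∧ (∀ v : V, v ∈ Δ' ↔ g v ∈ Δ'))) :
    -- the bipartite half Γ' = (Δ, A₂) is connected
    (∀ u w : V, u ∈ Δ → w ∈ Δ →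
      Relation.ReflTransGen
        (fun a b => halfArc A Δ Δ' a b ∨ halfArc A Δ Δ' b a) u w) ∧
    -- G⁺ preserves the arc set A₂
    (∀ g ∈ Gp, ∀ u w : V, halfArc A Δ Δ' u w → halfArc A Δ Δ' (g u) (g w)) ∧
    -- G⁺ is transitive on Δ
    (∀ u ∈ Δ, ∀ w ∈ Δ, ∃ g ∈ Gp, g u = w) ∧
    -- G⁺ is transitive on the ⌊s/2⌋-arcs of Γ'
    (∀ p q : Fin (s / 2 + 1) → V,
      IsArcSeq (halfArc A Δ Δ') (s / 2) p → IsArcSeq (halfArc A Δ Δ') (s / 2) q →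
      ∃ g ∈ Gp, ∀ i : Fin (s / 2 + 1), g (p i) = q i) ∧
    -- and either Γ' is a digraph, or Γ ≅ C₄→, G ≅ Z₄, |Δ| = 2 and Γ' is the complete
    -- graph K₂ (with both ordered pairs of the two vertices of Δ as arcs)
    (IsDigraph (halfArc A Δ Δ') ∨
      (IsoDirectedCycle A 4 ∧ Nonempty (G ≃* Multiplicative (ZMod 4)) ∧
        Δ.ncard = 2 ∧
        (∀ u w : V, halfArc A Δ Δ' u w ↔ (u ∈ Δ ∧ w ∈ Δ ∧ u ≠ w)))) := by
  have mem_Gp (g : Equiv.Perm V) (hg : g ∈ G) (u : V) (hu : u ∈ Δ) (hgu : g u ∈ Δ) :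
      g ∈ Gp := by
    have hΔ := hbip.mem_iff_map_mem hconn (hAut g hg) hu hgu
    exact (hGp g).2 ⟨hg, hΔ, fun v => by rw [hbip.mem_right_iff, hbip.mem_right_iff, hΔ]⟩
  refine ⟨fun u w hu hw => ?_, ?_, ?_, fun p q hp hq => ?_, ?_⟩
  · have huw := reflTransGen_of_vertexTransitive hconn hAut hvt u w
    exact ReflTransGen.mono (fun _ _ => Or.inl) _ _ ((reflTransGen_halfArc hbip hu huw).1 hw)
  · rintro g hg u w ⟨hu, hw, v, hv, huv, hvw⟩
    obtain ⟨hgG, hΔ, hΔ'⟩ := (hGp g).1 hg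
    exact ⟨(hΔ u).1 hu, (hΔ w).1 hw, g v, (hΔ' v).1 hv, hAut g hgG _ _ huv,
      hAut g hgG _ _ hvw⟩
  · intro u hu w hw
    obtain ⟨g, hg, rfl⟩ := hvt u w
    exact ⟨g, mem_Gp g hg u hu hw, rfl⟩
  · obtain ⟨hp₀, -, v, -, hv, -⟩ := hp ⟨0, by omega⟩
    obtain ⟨hq₀, -⟩ := hq ⟨0, by omega⟩
    have hat' := hat.mono (exists_arc_from hAut hvt hv) (by omega : 2 * (s / 2) ≤ s)
    obtain ⟨g, hg, hgpq⟩ := hat'.exists_map_of_halfArc hp hq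
    exact ⟨g, mem_Gp g hg _ hp₀ (hgpq _ ▸ hq₀), hgpq⟩
  · refine or_iff_not_imp_left.2 fun hD => ?_
    obtain ⟨c, hc, hc0, hcΔ⟩ := exists_closed_of_not_isDigraph_halfArc hD
    have hiso := isoDirectedCycle_four_of_closed hdig hconn hAut hvt
      (hat.mono (exists_arc_from hAut hvt (hc 0)) hs) hc hc0
    obtain ⟨e, he⟩ := id hiso
    exact ⟨hiso, nonempty_mulEquiv_of_isoDirectedCycle e he hAut hvt,
      ncard_eq_two_of_isoDirectedCycle_four e he hbip hcΔ,
      halfArc_iff_ne_of_isoDirectedCycle_four e he hbip hcΔ⟩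

theorem bipartite_half
    [Finite V] (A : V → V → Prop) (G Gp : Subgroup (Equiv.Perm V)) (s : ℕ)
    (Δ Δ' : Set V)
    (hdig : IsDigraph A) (hconn : Connected A) (hAut : PreservesArcs A G)
    (hvt : VertexTransitive G) (hs : 4 ≤ s) (hat : ArcTransitive A G s)
    (hbip : IsBipartition A Δ Δ')
    -- G⁺ is the subgroup of G fixing Δ and Δ' setwise
    (hGp : ∀ g : Equiv.Perm V, g ∈ Gp ↔
      (g ∈ G ∧ (∀ v : V, v ∈ Δ ↔ g v ∈ Δ) ∧ (∀ v : V, v ∈ Δ' ↔ g v ∈ Δ')))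
    -- and it has index 2 in G
    (hidx : (Gp.subgroupOf G).index = 2) :
    -- the bipartite half Γ' = (Δ, A₂) is connected
    (∀ u w : V, u ∈ Δ → w ∈ Δ →
      Relation.ReflTransGen
        (fun a b => halfArc A Δ Δ' a b ∨ halfArc A Δ Δ' b a) u w) ∧
    -- G⁺ preserves the arc set A₂
    (∀ g ∈ Gp, ∀ u w : V, halfArc A Δ Δ' u w → halfArc A Δ Δ' (g u) (g w)) ∧
    -- G⁺ is transitive on Δ
    (∀ u ∈ Δ, ∀ w ∈ Δ, ∃ g ∈ Gp, g u = w) ∧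
    -- G⁺ is transitive on the ⌊s/2⌋-arcs of Γ'
    (∀ p q : Fin (s / 2 + 1) → V,
      IsArcSeq (halfArc A Δ Δ') (s / 2) p → IsArcSeq (halfArc A Δ Δ') (s / 2) q →
      ∃ g ∈ Gp, ∀ i : Fin (s / 2 + 1), g (p i) = q i) ∧
    -- and either Γ' is a digraph, or Γ ≅ C₄→, G ≅ Z₄, |Δ| = 2 and Γ' is the complete
    -- graph K₂ (with both ordered pairs of the two vertices of Δ as arcs)
    (IsDigraph (halfArc A Δ Δ') ∨
      (IsoDirectedCycle A 4 ∧ Nonempty (G ≃* Multiplicative (ZMod 4)) ∧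
        Δ.ncard = 2 ∧
        (∀ u w : V, halfArc A Δ Δ' u w ↔ (u ∈ Δ ∧ w ∈ Δ ∧ u ≠ w)))) :=
  bipartite_half_general A G Gp s Δ Δ' hdig hconn hAut hvt hs hat hbip hGp

end ArcTransDigraph
end
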